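/- arXiv:2210.12704 — 4 statements merged into one kernel-verified Lean document; each statement's English description precedes it below -/
import Mathlib

section
/- Let f be monotone submodular with f(∅)=0, each element x have a positive integer cost c(x), and OPT(B) = max { f(T) : ∑_{x∈T} c(x) ≤ B }. Suppose the weighted greedy algorithm, which at each step picks an element maximizing (f(S∪{x}) - f(S))/c(x), runs until the first step where adding the greedily best element would exceed budget B, and then adds that element anyway. Then the resulting set S satisfies f(S) ≥ (1 - 1/e) · OPT(B). -/
open Finset

private lemma sum_marginal_bound {α : Type*} [DecidableEq α]
    (f : Finset α → ℝ)
    (hmono : ∀ S T : Finset α, S ⊆ T → f S ≤ f T)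
    (hsub : ∀ (S T : Finset α) (x : α), S ⊆ T → x ∉ T →
      f (insert x T) - f T ≤ f (insert x S) - f S)
    (T S : Finset α) :
    f T ≤ f S + ∑ y ∈ T \ S, (f (insert y S) - f S) := by
  have key : ∀ T : Finset α, f (T ∪ S) ≤ f S + ∑ y ∈ T \ S, (f (insert y S) - f S) := by
    intro T
    induction T using Finset.induction_on with
    | empty => simp
    | @insert a T ha ih =>
      by_cases haS : a ∈ S
      · have h1 : insert a T ∪ S = T ∪ S := by
          rw [Finset.insert_union, Finset.insert_eq_self.2 (Finset.mem_union_right _ haS)]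
        have h2 : insert a T \ S = T \ S := Finset.insert_sdiff_of_mem _ haS
        rw [h1, h2]; exact ih
      · have haTS : a ∉ T ∪ S := by simp [ha, haS]
        have h1 : insert a T ∪ S = insert a (T ∪ S) := Finset.insert_union _ _ _
        have h2 : insert a T \ S = insert a (T \ S) := by
          rw [Finset.insert_sdiff_of_notMem _ haS]
        have h3 : a ∉ T \ S := by simp [ha]
        rw [h1, h2, Finset.sum_insert h3]
        have h4 := hsub S (T ∪ S) a Finset.subset_union_right haTS
        linarith
  calc f T ≤ f (T ∪ S) := hmono _ _ Finset.subset_union_left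
    _ ≤ _ := key T

/-- Budgeted weighted greedy with one budget-exceeding final selection achieves a
`(1 - 1/e)` approximation: `f` is monotone submodular with `f ∅ = 0`, each element
`x` has positive integer cost `c x`, the greedy algorithm repeatedly adds an element
maximizing the cost-normalized marginal gain `(f (S ∪ {x}) - f S) / c x`, all steps
but the last stay within budget `B`, the last (greedily best) step exceeds `B` and is
taken anyway.  Then the resulting set `S N` satisfies `f (S N) ≥ (1 - 1/e) ⬝ OPT(B)`,
i.e. `f (S N) ≥ (1 - 1/e) * f T` for every `T` with `∑_{x ∈ T} c x ≤ B`. -/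
theorem weighted_greedy_exceed_budget_approx {α : Type*} [Fintype α] [DecidableEq α]
    (f : Finset α → ℝ) (c : α → ℕ+) (B : ℕ)
    (hmono : ∀ S T : Finset α, S ⊆ T → f S ≤ f T)
    (hsub : ∀ (S T : Finset α) (x : α), S ⊆ T → x ∉ T →
      f (insert x T) - f T ≤ f (insert x S) - f S)
    (hempty : f ∅ = 0)
    (N : ℕ) (hN : 0 < N) (S : ℕ → Finset α) (x : ℕ → α)
    (hS0 : S 0 = ∅)
    (hgreedy : ∀ i < N, x i ∉ S i ∧ S (i + 1) = insert (x i) (S i) ∧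
      ∀ y : α, y ∉ S i →
        (f (insert y (S i)) - f (S i)) / ((c y : ℕ) : ℝ) ≤
        (f (insert (x i) (S i)) - f (S i)) / ((c (x i) : ℕ) : ℝ))
    (hwithin : ∀ i : ℕ, i + 1 < N → (∑ z ∈ S (i + 1), (c z : ℕ)) ≤ B)
    (hlast : B < ∑ z ∈ S N, (c z : ℕ)) :
    ∀ T : Finset α, (∑ z ∈ T, (c z : ℕ)) ≤ B →
      f (S N) ≥ (1 - 1 / Real.exp 1) * f T := by
  intro T hT
  have hfSN0 : 0 ≤ f (S N) := by
    have := hmono ∅ (S N) (Finset.empty_subset _); linarith [hempty ▸ this]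
  have hfT0 : 0 ≤ f T := by
    have := hmono ∅ T (Finset.empty_subset _); linarith [hempty ▸ this]
  have hexp1 : (1:ℝ) < Real.exp 1 := by
    have := Real.add_one_le_exp (1:ℝ); linarith
  -- case B = 0 : T must be empty
  rcases Nat.eq_zero_or_pos B with hB0 | hBpos
  · have hTe : T = ∅ := by
      by_contra h
      obtain ⟨z, hz⟩ := Finset.nonempty_iff_ne_empty.2 h
      have hpos : 0 < ∑ z ∈ T, (c z : ℕ) :=
        Finset.sum_pos' (fun _ _ => Nat.zero_le _) ⟨z, hz, (c z).pos⟩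
      omega
    rw [hTe, hempty, mul_zero]
    exact hfSN0
  have hBR : (0:ℝ) < (B:ℕ) := by exact_mod_cast hBpos
  -- per-step bound
  have hstep : ∀ i < N, f T - f (S i) ≤
      (B:ℝ) * ((f (S (i+1)) - f (S i)) / ((c (x i) : ℕ) : ℝ)) := by
    intro i hi
    obtain ⟨hxi, hSi1, hgr⟩ := hgreedy i hi
    have hci : (0:ℝ) < ((c (x i) : ℕ) : ℝ) := by exact_mod_cast (c (x i)).pos
    have hg0 : 0 ≤ f (S (i+1)) - f (S i) := by
      rw [hSi1]; linarith [hmono (S i) (insert (x i) (S i)) (Finset.subset_insert _ _)]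
    set r := (f (S (i+1)) - f (S i)) / ((c (x i) : ℕ) : ℝ) with hrdef
    have hr0 : 0 ≤ r := div_nonneg hg0 hci.le
    have hrval : r = (f (insert (x i) (S i)) - f (S i)) / ((c (x i) : ℕ) : ℝ) := by
      rw [hrdef, hSi1]
    have h1 := sum_marginal_bound f hmono hsub T (S i)
    have h2 : ∑ y ∈ T \ S i, (f (insert y (S i)) - f (S i)) ≤
        ∑ y ∈ T \ S i, ((c y : ℕ) : ℝ) * r := by
      apply Finset.sum_le_sum
      intro y hy
      have hyS : y ∉ S i := (Finset.mem_sdiff.1 hy).2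
      have hcy : (0:ℝ) < ((c y : ℕ) : ℝ) := by exact_mod_cast (c y).pos
      have h3 := hgr y hyS
      rw [← hrval] at h3
      calc f (insert y (S i)) - f (S i)
          = (f (insert y (S i)) - f (S i)) / ((c y : ℕ) : ℝ) * ((c y : ℕ) : ℝ) := by
            field_simp
        _ ≤ r * ((c y : ℕ) : ℝ) := by
            exact mul_le_mul_of_nonneg_right h3 hcy.le
        _ = ((c y : ℕ) : ℝ) * r := mul_comm _ _
    have h4 : ∑ y ∈ T \ S i, ((c y : ℕ) : ℝ) * r
        = (∑ y ∈ T \ S i, ((c y : ℕ) : ℝ)) * r := by rw [Finset.sum_mul]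
    have h5 : (∑ y ∈ T \ S i, ((c y : ℕ) : ℝ)) ≤ (B : ℝ) := by
      have hn : (∑ y ∈ T \ S i, (c y : ℕ)) ≤ B := by
        calc (∑ y ∈ T \ S i, (c y : ℕ)) ≤ ∑ y ∈ T, (c y : ℕ) :=
              Finset.sum_le_sum_of_subset (Finset.sdiff_subset)
          _ ≤ B := hT
      exact_mod_cast hn
    have h6 : (∑ y ∈ T \ S i, ((c y : ℕ) : ℝ)) * r ≤ (B : ℝ) * r :=
      mul_le_mul_of_nonneg_right h5 hr0
    linarith
  -- cost identity
  have hcost : ∀ i, i ≤ N → (∑ z ∈ S i, (c z : ℕ)) = ∑ j ∈ Finset.range i, (c (x j) : ℕ) := by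
    intro i
    induction i with
    | zero => intro _; simp [hS0]
    | succ i ih =>
      intro hi
      obtain ⟨hxi, hSi1, _⟩ := hgreedy i (by omega)
      rw [hSi1, Finset.sum_insert hxi, Finset.sum_range_succ, ih (by omega)]
      ring
  -- main inductive bound
  have hmain : ∀ i, i ≤ N → f T - f (S i) ≤
      f T * Real.exp (-(∑ j ∈ Finset.range i, ((c (x j) : ℕ) : ℝ)) / (B : ℝ)) := by
    intro i
    induction i with
    | zero => intro _; simp [hS0, hempty]
    | succ i ih =>
      intro hi
      have hiN : i < N := by omega
      have ih' := ih (by omega)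
      obtain ⟨hxi, hSi1, _⟩ := hgreedy i hiN
      have hmonoS : f (S i) ≤ f (S (i+1)) := by
        rw [hSi1]; exact hmono _ _ (Finset.subset_insert _ _)
      have hexp_pos : (0:ℝ) < Real.exp (-(∑ j ∈ Finset.range (i+1), ((c (x j) : ℕ) : ℝ)) / (B : ℝ)) :=
        Real.exp_pos _
      by_cases hΔ : f T - f (S i) ≤ 0
      · have : f T - f (S (i+1)) ≤ 0 := by linarith
        nlinarith [Real.exp_pos (-(∑ j ∈ Finset.range (i+1), ((c (x j) : ℕ) : ℝ)) / (B : ℝ))]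
      · push_neg at hΔ
        have hci : (0:ℝ) < ((c (x i) : ℕ) : ℝ) := by exact_mod_cast (c (x i)).pos
        have hs := hstep i hiN
        -- g ≥ (c_i / B) * Δ_i
        have hg : f (S (i+1)) - f (S i) ≥ ((c (x i) : ℕ) : ℝ) / (B : ℝ) * (f T - f (S i)) := by
          have := hs
          rw [ge_iff_le, div_mul_eq_mul_div, div_le_iff₀ hBR]
          calc ((c (x i) : ℕ) : ℝ) * (f T - f (S i))
              ≤ ((c (x i) : ℕ) : ℝ) * ((B:ℝ) * ((f (S (i+1)) - f (S i)) / ((c (x i) : ℕ) : ℝ))) :=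
                mul_le_mul_of_nonneg_left hs hci.le
            _ = (f (S (i+1)) - f (S i)) * (B:ℝ) := by field_simp
        have hone : 1 - ((c (x i) : ℕ) : ℝ) / (B : ℝ) ≤ Real.exp (-(((c (x i) : ℕ) : ℝ) / (B : ℝ))) := by
          have := Real.add_one_le_exp (-(((c (x i) : ℕ) : ℝ) / (B : ℝ)))
          linarith
        have hstep2 : f T - f (S (i+1)) ≤ (f T - f (S i)) * (1 - ((c (x i) : ℕ) : ℝ) / (B : ℝ)) := by
          nlinarith
        have hstep3 : (f T - f (S i)) * (1 - ((c (x i) : ℕ) : ℝ) / (B : ℝ)) ≤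
            (f T - f (S i)) * Real.exp (-(((c (x i) : ℕ) : ℝ) / (B : ℝ))) :=
          mul_le_mul_of_nonneg_left hone hΔ.le
        have hstep4 : (f T - f (S i)) * Real.exp (-(((c (x i) : ℕ) : ℝ) / (B : ℝ))) ≤
            f T * Real.exp (-(∑ j ∈ Finset.range i, ((c (x j) : ℕ) : ℝ)) / (B : ℝ)) *
              Real.exp (-(((c (x i) : ℕ) : ℝ) / (B : ℝ))) :=
          mul_le_mul_of_nonneg_right ih' (Real.exp_pos _).le
        have heq : f T * Real.exp (-(∑ j ∈ Finset.range i, ((c (x j) : ℕ) : ℝ)) / (B : ℝ)) *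
              Real.exp (-(((c (x i) : ℕ) : ℝ) / (B : ℝ)))
            = f T * Real.exp (-(∑ j ∈ Finset.range (i+1), ((c (x j) : ℕ) : ℝ)) / (B : ℝ)) := by
          rw [mul_assoc, ← Real.exp_add, Finset.sum_range_succ]
          ring_nf
        linarith [heq ▸ hstep4]
  -- combine
  have hfin := hmain N le_rfl
  have hCB : (B:ℝ) < (∑ j ∈ Finset.range N, ((c (x j) : ℕ) : ℝ)) := by
    have h := hcost N le_rfl
    have : B < ∑ j ∈ Finset.range N, (c (x j) : ℕ) := h ▸ hlast
    exact_mod_cast this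
  have hratio : (1:ℝ) ≤ (∑ j ∈ Finset.range N, ((c (x j) : ℕ) : ℝ)) / (B : ℝ) :=
    (le_div_iff₀ hBR).2 (by linarith)
  have hexple : Real.exp (-(∑ j ∈ Finset.range N, ((c (x j) : ℕ) : ℝ)) / (B : ℝ)) ≤
      Real.exp (-1) := by
    apply Real.exp_le_exp.2
    rw [neg_div]
    linarith
  have hexpinv : Real.exp (-1 : ℝ) = 1 / Real.exp 1 := by
    rw [Real.exp_neg]; ring
  have h7 : f T * Real.exp (-(∑ j ∈ Finset.range N, ((c (x j) : ℕ) : ℝ)) / (B : ℝ)) ≤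
      f T * (1 / Real.exp 1) := by
    rw [← hexpinv]
    exact mul_le_mul_of_nonneg_left hexple hfT0
  have : f T - f (S N) ≤ f T * (1 / Real.exp 1) := le_trans hfin h7
  nlinarith
end

section
/- Let f be monotone submodular with f(∅)=0 and positive integer costs c(x). If the weighted greedy algorithm (selecting argmax of (f(S∪{x})-f(S))/c(x)) has at some step produced a set S with total cost B' and no selection so far exceeded the budget, then f(S) ≥ (1 - e^{-1}) · OPT(B'), where OPT(B') is the maximum of f over sets of total cost at most B'. -/
open Finset

private lemma submod_union_bound {α : Type*} [DecidableEq α] (f : Finset α → ℝ)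
    (hsub : ∀ (S T : Finset α) (x : α), S ⊆ T → x ∉ T →
      f (insert x T) - f T ≤ f (insert x S) - f S)
    (S : Finset α) (D : Finset α) :
    f (S ∪ D) ≤ f S + ∑ y ∈ D \ S, (f (insert y S) - f S) := by
  induction D using Finset.induction_on with
  | empty => simp
  | @insert a D ha ih =>
    rw [Finset.union_insert]
    by_cases haS : a ∈ S
    · rw [Finset.insert_eq_self.2 (Finset.mem_union_left D haS),
        Finset.insert_sdiff_of_mem _ haS]
      exact ih
    · have haSD : a ∉ S ∪ D := by simp [haS, ha]
      have h1 : f (insert a (S ∪ D)) - f (S ∪ D) ≤ f (insert a S) - f S :=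
        hsub S (S ∪ D) a Finset.subset_union_left haSD
      rw [Finset.insert_sdiff_of_notMem _ haS,
        Finset.sum_insert (by simp [ha])]
      linarith

/-- Within-budget guarantee of weighted greedy: if after `N` steps of the weighted
greedy algorithm (each step adding an element maximizing the cost-normalized marginal
gain) no selection has exceeded the budget `B`, and the current set `S N` has total
cost `B'`, then `f (S N) ≥ (1 - e⁻¹) ⬝ OPT(B')`, i.e. `f (S N) ≥ (1 - e⁻¹) * f T`
for every `T` of total cost at most `B'`. -/
theorem weighted_greedy_within_budget_approx {α : Type*} [Fintype α] [DecidableEq α]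
    (f : Finset α → ℝ) (c : α → ℕ+) (B : ℕ)
    (hmono : ∀ S T : Finset α, S ⊆ T → f S ≤ f T)
    (hsub : ∀ (S T : Finset α) (x : α), S ⊆ T → x ∉ T →
      f (insert x T) - f T ≤ f (insert x S) - f S)
    (hempty : f ∅ = 0)
    (N : ℕ) (S : ℕ → Finset α) (x : ℕ → α)
    (hS0 : S 0 = ∅)
    (hgreedy : ∀ i < N, x i ∉ S i ∧ S (i + 1) = insert (x i) (S i) ∧
      ∀ y : α, y ∉ S i →
        (f (insert y (S i)) - f (S i)) / ((c y : ℕ) : ℝ) ≤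
        (f (insert (x i) (S i)) - f (S i)) / ((c (x i) : ℕ) : ℝ))
    (hwithin : ∀ i ≤ N, (∑ z ∈ S i, (c z : ℕ)) ≤ B)
    (B' : ℕ) (hB' : B' = ∑ z ∈ S N, (c z : ℕ)) :
    ∀ T : Finset α, (∑ z ∈ T, (c z : ℕ)) ≤ B' →
      f (S N) ≥ (1 - Real.exp (-1)) * f T := by
  intro T hT
  have hfT : 0 ≤ f T := by
    have := hmono ∅ T (Finset.empty_subset T); rw [hempty] at this; exact this
  have hfSN : 0 ≤ f (S N) := by
    have := hmono ∅ (S N) (Finset.empty_subset _); rw [hempty] at this; exact this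
  -- chain of inclusions
  have hchain : ∀ j ≤ N, ∀ i ≤ j, S i ⊆ S j := by
    intro j
    induction j with
    | zero =>
      intro _ i hi
      have : i = 0 := by omega
      subst this; exact Finset.Subset.refl _
    | succ j ih =>
      intro hj i hi
      rcases Nat.lt_or_ge i (j + 1) with h | h
      · have hSj : S j ⊆ S (j + 1) := by
          rw [(hgreedy j (by omega)).2.1]; exact Finset.subset_insert _ _
        exact ((ih (by omega) i (by omega)).trans hSj)
      · have : i = j + 1 := by omega
        subst this; exact Finset.Subset.refl _
  -- cost sum identity
  have hcostsum : ∀ k ≤ N, ∑ i ∈ Finset.range k, (c (x i) : ℕ) = ∑ z ∈ S k, (c z : ℕ) := by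
    intro k hk
    induction k with
    | zero => simp [hS0]
    | succ k ih =>
      obtain ⟨hxni, hSsucc, -⟩ := hgreedy k (by omega)
      rw [Finset.sum_range_succ, ih (by omega), hSsucc, Finset.sum_insert hxni]
      omega
  by_cases hB0 : B' = 0
  · have hTempty : T = ∅ := by
      rw [Finset.eq_empty_iff_forall_notMem]
      intro z hz
      have h1 : (c z : ℕ) ≤ ∑ z ∈ T, (c z : ℕ) :=
        Finset.single_le_sum (f := fun z => (c z : ℕ)) (fun _ _ => Nat.zero_le _) hz
      have h2 := (c z).pos
      omega
    subst hTempty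
    rw [hempty, mul_zero]
    exact hfSN
  -- main case
  have hBp : (0 : ℝ) < (B' : ℝ) := by
    have : 0 < B' := Nat.pos_of_ne_zero hB0
    exact_mod_cast this
  -- each chosen element has cost at most B'
  have hcle : ∀ i < N, (c (x i) : ℕ) ≤ B' := by
    intro i hi
    have hx1 : x i ∈ S (i + 1) := by
      rw [(hgreedy i hi).2.1]; exact Finset.mem_insert_self _ _
    have hxN : x i ∈ S N := hchain N le_rfl (i + 1) (by omega) hx1
    rw [hB']
    exact Finset.single_le_sum (f := fun z => (c z : ℕ)) (fun _ _ => Nat.zero_le _) hxN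
  have hr_nonneg : ∀ i, (0 : ℝ) ≤ ((c (x i) : ℕ) : ℝ) / (B' : ℝ) := fun i =>
    div_nonneg (by positivity) hBp.le
  have hr_le_one : ∀ i < N, (0 : ℝ) ≤ 1 - ((c (x i) : ℕ) : ℝ) / (B' : ℝ) := by
    intro i hi
    have h := hcle i hi
    have : ((c (x i) : ℕ) : ℝ) / (B' : ℝ) ≤ 1 := by
      rw [div_le_one hBp]; exact_mod_cast h
    linarith
  -- the key step inequality
  have hstepineq : ∀ i < N,
      f T - f (S (i + 1)) ≤ (1 - ((c (x i) : ℕ) : ℝ) / (B' : ℝ)) * (f T - f (S i)) := by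
    intro i hi
    obtain ⟨hxni, hSsucc, hratio⟩ := hgreedy i hi
    have hcx : (0 : ℝ) < ((c (x i) : ℕ) : ℝ) := by exact_mod_cast (c (x i)).pos
    set θ : ℝ := (f (insert (x i) (S i)) - f (S i)) / ((c (x i) : ℕ) : ℝ) with hθ
    have hθ0 : 0 ≤ θ := by
      apply div_nonneg _ hcx.le
      have := hmono (S i) (insert (x i) (S i)) (Finset.subset_insert _ _)
      linarith
    have key : f T - f (S i) ≤ (B' : ℝ) * θ := by
      have h1 : f T ≤ f (S i ∪ T) := hmono T _ Finset.subset_union_right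
      have h2 := submod_union_bound f hsub (S i) T
      have h3 : ∑ y ∈ T \ S i, (f (insert y (S i)) - f (S i)) ≤
          ∑ y ∈ T \ S i, ((c y : ℕ) : ℝ) * θ := by
        apply Finset.sum_le_sum
        intro y hy
        have hyS : y ∉ S i := (Finset.mem_sdiff.1 hy).2
        have hcy : (0 : ℝ) < ((c y : ℕ) : ℝ) := by exact_mod_cast (c y).pos
        have := hratio y hyS
        rw [div_le_iff₀ hcy] at this
        linarith [this]
      have h4 : ∑ y ∈ T \ S i, ((c y : ℕ) : ℝ) * θ ≤ (B' : ℝ) * θ := by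
        rw [← Finset.sum_mul]
        apply mul_le_mul_of_nonneg_right _ hθ0
        have h5 : ∑ y ∈ T \ S i, ((c y : ℕ) : ℝ) ≤ ∑ y ∈ T, ((c y : ℕ) : ℝ) :=
          Finset.sum_le_sum_of_subset_of_nonneg (Finset.sdiff_subset)
            (fun _ _ _ => by positivity)
        have h6 : ∑ y ∈ T, ((c y : ℕ) : ℝ) ≤ (B' : ℝ) := by
          have : ((∑ z ∈ T, (c z : ℕ) : ℕ) : ℝ) ≤ (B' : ℝ) := by exact_mod_cast hT
          rw [Nat.cast_sum] at this
          exact this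
        linarith
      linarith
    have hgain_eq : f (S (i + 1)) - f (S i) = ((c (x i) : ℕ) : ℝ) * θ := by
      rw [hSsucc, hθ, mul_div_cancel₀ _ hcx.ne']
    have hA : ((c (x i) : ℕ) : ℝ) / (B' : ℝ) * (f T - f (S i)) ≤
        ((c (x i) : ℕ) : ℝ) * θ := by
      have := mul_le_mul_of_nonneg_left key (hr_nonneg i)
      calc ((c (x i) : ℕ) : ℝ) / (B' : ℝ) * (f T - f (S i))
          ≤ ((c (x i) : ℕ) : ℝ) / (B' : ℝ) * ((B' : ℝ) * θ) := this
        _ = ((c (x i) : ℕ) : ℝ) * θ := by field_simp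
    have hrw : (1 - ((c (x i) : ℕ) : ℝ) / (B' : ℝ)) * (f T - f (S i)) =
        (f T - f (S i)) - ((c (x i) : ℕ) : ℝ) / (B' : ℝ) * (f T - f (S i)) := by ring
    linarith
  -- inductive product bound
  have hprod : ∀ k ≤ N, f T - f (S k) ≤
      f T * ∏ i ∈ Finset.range k, (1 - ((c (x i) : ℕ) : ℝ) / (B' : ℝ)) := by
    intro k
    induction k with
    | zero => intro _; simp [hS0, hempty]
    | succ k ih =>
      intro hk
      have ihk := ih (by omega)
      rw [Finset.prod_range_succ]
      calc f T - f (S (k + 1))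
          ≤ (1 - ((c (x k) : ℕ) : ℝ) / (B' : ℝ)) * (f T - f (S k)) :=
            hstepineq k (by omega)
        _ ≤ (1 - ((c (x k) : ℕ) : ℝ) / (B' : ℝ)) *
            (f T * ∏ i ∈ Finset.range k, (1 - ((c (x i) : ℕ) : ℝ) / (B' : ℝ))) :=
            mul_le_mul_of_nonneg_left ihk (hr_le_one k (by omega))
        _ = f T * ((∏ i ∈ Finset.range k, (1 - ((c (x i) : ℕ) : ℝ) / (B' : ℝ))) *
            (1 - ((c (x k) : ℕ) : ℝ) / (B' : ℝ))) := by ring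
  have hfinal := hprod N le_rfl
  have hprodle : ∏ i ∈ Finset.range N, (1 - ((c (x i) : ℕ) : ℝ) / (B' : ℝ)) ≤
      Real.exp (-1) := by
    have hsum1 : ∑ i ∈ Finset.range N, ((c (x i) : ℕ) : ℝ) / (B' : ℝ) = 1 := by
      rw [← Finset.sum_div]
      have : (∑ i ∈ Finset.range N, ((c (x i) : ℕ) : ℝ)) = (B' : ℝ) := by
        rw [← Nat.cast_sum]
        exact_mod_cast congrArg (Nat.cast (R := ℝ)) (hcostsum N le_rfl ▸ hB'.symm)
      rw [this, div_self hBp.ne']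
    calc ∏ i ∈ Finset.range N, (1 - ((c (x i) : ℕ) : ℝ) / (B' : ℝ))
        ≤ ∏ i ∈ Finset.range N, Real.exp (-(((c (x i) : ℕ) : ℝ) / (B' : ℝ))) := by
          apply Finset.prod_le_prod
          · intro i hi; exact hr_le_one i (Finset.mem_range.1 hi)
          · intro i hi
            have := Real.add_one_le_exp (-(((c (x i) : ℕ) : ℝ) / (B' : ℝ)))
            linarith
      _ = Real.exp (∑ i ∈ Finset.range N, -(((c (x i) : ℕ) : ℝ) / (B' : ℝ))) :=
          (Real.exp_sum _ _).symm
      _ = Real.exp (-1) := by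
          rw [Finset.sum_neg_distrib, hsum1]
  have hle : f T - f (S N) ≤ f T * Real.exp (-1) :=
    le_trans hfinal (mul_le_mul_of_nonneg_left hprodle hfT)
  have : (1 - Real.exp (-1)) * f T = f T - f T * Real.exp (-1) := by ring
  linarith
end

section
/- For jointly distributed finite discrete random variables, the mutual information satisfies I(Y_S ∪ {Z} ; W) - I(Y_S ; W) ≥ I(Y_T ∪ {Z} ; W) - I(Y_T ; W) whenever S ⊆ T, provided the variables {Y_i} are conditionally independent given W. That is, S ↦ I(Y_S ; W) is submodular. -/
/-!
Conditional independence gives `H(Y_{S ∪ {z}}, W) = H(Y_S, W) + H(Y_z, W) - H(W)`, so the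
increment `I(Y_{S ∪ {z}}; W) - I(Y_S; W)` is `H(Y_{S ∪ {z}}) - H(Y_S)` up to a term that does
not depend on `S`, and the claim reduces to the submodularity of joint entropy, i.e. to
`I(Y_{T \ S}; Y_z | Y_S) ≥ 0`. Both facts come from writing the conditional mutual information
`I(X; Y | Z)` as the expectation of `log (P(x, y, z) P(z) / (P(x, z) P(y, z)))`: under
conditional independence it vanishes pointwise, and it is nonnegative by Gibbs' inequality.
-/

open Finset

/-- Probability that a finite discrete random variable `X` takes value `b`. -/
def probOf {Ω β : Type*} [Fintype Ω] (p : Ω → ℝ) (X : Ω → β) [DecidableEq β]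
    (b : β) : ℝ :=
  ∑ ω, if X ω = b then p ω else 0

/-- Shannon entropy of a finite discrete random variable. -/
noncomputable def shannonEntropy {Ω β : Type*} [Fintype Ω] [Fintype β] [DecidableEq β]
    (p : Ω → ℝ) (X : Ω → β) : ℝ :=
  ∑ b, Real.negMulLog (probOf p X b)

/-- Mutual information `I(X;W) = H(X) + H(W) - H(X,W)`. -/
noncomputable def mutualInfo {Ω β γ : Type*} [Fintype Ω] [Fintype β] [Fintype γ]
    [DecidableEq β] [DecidableEq γ] (p : Ω → ℝ) (X : Ω → β) (W : Ω → γ) : ℝ :=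
  shannonEntropy p X + shannonEntropy p W - shannonEntropy p (fun ω => (X ω, W ω))

/-- The joint random variable `Y_S = (Y i)_{i ∈ S}`. -/
def jointVar {Ω ι β : Type*} (Y : ι → Ω → β) (S : Finset ι) (ω : Ω) :
    {i // i ∈ S} → β :=
  fun i => Y i.1 ω

section probOf

variable {Ω α β : Type*} [Fintype Ω] (p : Ω → ℝ)

lemma probOf_nonneg (hp : ∀ ω, 0 ≤ p ω) [DecidableEq α] (X : Ω → α) (a : α) :
    0 ≤ probOf p X a :=
  Finset.sum_nonneg fun ω _ => by split_ifs <;> simp [hp ω]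

lemma probOf_apply_pos (hp : ∀ ω, 0 ≤ p ω) [DecidableEq α] (X : Ω → α) {ω : Ω}
    (hω : 0 < p ω) : 0 < probOf p X (X ω) := by
  refine hω.trans_le ?_
  simpa [probOf] using Finset.single_le_sum (f := fun ω' => if X ω' = X ω then p ω' else 0)
    (fun ω' _ => by split_ifs <;> simp [hp ω']) (Finset.mem_univ ω)

lemma probOf_le_probOf_comp (hp : ∀ ω, 0 ≤ p ω) [DecidableEq α] [DecidableEq β]
    (X : Ω → α) (f : α → β) (a : α) :
    probOf p X a ≤ probOf p (fun ω => f (X ω)) (f a) :=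
  Finset.sum_le_sum fun ω _ => by
    by_cases h : X ω = a
    · simp [h]
    · simp only [h, if_false]; split_ifs <;> simp [hp ω]

lemma probOf_comp_of_injective [DecidableEq α] [DecidableEq β] (X : Ω → α) {f : α → β}
    (hf : Function.Injective f) (a : α) :
    probOf p (fun ω => f (X ω)) (f a) = probOf p X a := by
  simp only [probOf, hf.eq_iff]

lemma sum_probOf_mul [Fintype α] [DecidableEq α] (X : Ω → α) (g : α → ℝ) :
    ∑ a, probOf p X a * g a = ∑ ω, p ω * g (X ω) := by
  simp only [probOf, Finset.sum_mul, ite_mul, zero_mul]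
  rw [Finset.sum_comm]
  simp

lemma probOf_eq_sum_of_iff [DecidableEq α] [DecidableEq β] (X : Ω → α) (X' : Ω → β) (a : α)
    (A : Finset β) (h : ∀ ω, X ω = a ↔ X' ω ∈ A) :
    probOf p X a = ∑ b ∈ A, probOf p X' b := by
  unfold probOf
  rw [Finset.sum_comm]
  simp [h]

lemma sum_probOf_fst [Fintype α] [DecidableEq α] [DecidableEq β] (X : Ω → α) (Z : Ω → β)
    (b : β) : ∑ a, probOf p (fun ω => (X ω, Z ω)) (a, b) = probOf p Z b := by
  rw [probOf_eq_sum_of_iff p Z (fun ω => (X ω, Z ω)) b (Finset.univ ×ˢ {b}) (by simp [eq_comm]),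
    Finset.sum_product]
  simp

end probOf

section entropy

variable {Ω α β γ : Type*} [Fintype Ω] (p : Ω → ℝ)
  [Fintype α] [DecidableEq α] [Fintype β] [DecidableEq β] [Fintype γ] [DecidableEq γ]

lemma shannonEntropy_eq_sum (X : Ω → α) :
    shannonEntropy p X = -∑ ω, p ω * Real.log (probOf p X (X ω)) := by
  rw [shannonEntropy, ← sum_probOf_mul p X (fun a => Real.log (probOf p X a)),
    ← Finset.sum_neg_distrib]
  simp only [Real.negMulLog, neg_mul]

lemma shannonEntropy_comp_of_injective (X : Ω → α) {f : α → β} (hf : Function.Injective f) :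
    shannonEntropy p (fun ω => f (X ω)) = shannonEntropy p X := by
  simp only [shannonEntropy_eq_sum, probOf_comp_of_injective p X hf]

noncomputable def condMutualInfo (X : Ω → α) (Y : Ω → β) (Z : Ω → γ) : ℝ :=
  shannonEntropy p (fun ω => (X ω, Z ω)) + shannonEntropy p (fun ω => (Y ω, Z ω))
    - shannonEntropy p (fun ω => ((X ω, Y ω), Z ω)) - shannonEntropy p Z

lemma condMutualInfo_eq_sum (X : Ω → α) (Y : Ω → β) (Z : Ω → γ) :
    condMutualInfo p X Y Z = ∑ ω, p ω *
      (Real.log (probOf p (fun ω => ((X ω, Y ω), Z ω)) ((X ω, Y ω), Z ω))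
        + Real.log (probOf p Z (Z ω)) - Real.log (probOf p (fun ω => (X ω, Z ω)) (X ω, Z ω))
        - Real.log (probOf p (fun ω => (Y ω, Z ω)) (Y ω, Z ω))) := by
  simp only [condMutualInfo, shannonEntropy_eq_sum, mul_add, mul_sub, Finset.sum_add_distrib,
    Finset.sum_sub_distrib]
  ring

lemma condMutualInfo_eq_zero (hp : ∀ ω, 0 ≤ p ω) (X : Ω → α) (Y : Ω → β) (Z : Ω → γ)
    (h : ∀ x y z, probOf p (fun ω => ((X ω, Y ω), Z ω)) ((x, y), z) * probOf p Z z
      = probOf p (fun ω => (X ω, Z ω)) (x, z) * probOf p (fun ω => (Y ω, Z ω)) (y, z)) :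
    condMutualInfo p X Y Z = 0 := by
  rw [condMutualInfo_eq_sum]
  refine Finset.sum_eq_zero fun ω _ => ?_
  rcases (hp ω).eq_or_lt with hω | hω
  · rw [← hω, zero_mul]
  have hlog := congrArg Real.log (h (X ω) (Y ω) (Z ω))
  rw [Real.log_mul (probOf_apply_pos p hp _ hω).ne' (probOf_apply_pos p hp Z hω).ne',
    Real.log_mul (probOf_apply_pos p hp (fun ω => (X ω, Z ω)) hω).ne'
      (probOf_apply_pos p hp (fun ω => (Y ω, Z ω)) hω).ne'] at hlog
  rw [hlog]
  ring

lemma sum_probOf_mul_probOf_div (X : Ω → α) (Y : Ω → β) (Z : Ω → γ) :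
    ∑ x, ∑ y, ∑ z, probOf p (fun ω => (X ω, Z ω)) (x, z) * probOf p (fun ω => (Y ω, Z ω)) (y, z)
      / probOf p Z z = ∑ ω, p ω := by
  calc _ = ∑ x, ∑ z, ∑ y, probOf p (fun ω => (X ω, Z ω)) (x, z)
        * probOf p (fun ω => (Y ω, Z ω)) (y, z) / probOf p Z z :=
        Finset.sum_congr rfl fun _ _ => Finset.sum_comm
    _ = ∑ z, ∑ x, ∑ y, probOf p (fun ω => (X ω, Z ω)) (x, z)
        * probOf p (fun ω => (Y ω, Z ω)) (y, z) / probOf p Z z := Finset.sum_comm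
    _ = ∑ z, (∑ x, probOf p (fun ω => (X ω, Z ω)) (x, z))
        * (∑ y, probOf p (fun ω => (Y ω, Z ω)) (y, z)) / probOf p Z z := by
        simp only [Finset.sum_mul_sum, Finset.sum_div]
    -- `a * a / a = a` holds also at `a = 0`, where `/` returns `0`.
    _ = ∑ z, probOf p Z z := by simp only [sum_probOf_fst, mul_self_div_self]
    _ = ∑ ω, p ω := by simpa using sum_probOf_mul p Z 1

lemma condMutualInfo_nonneg (hp : ∀ ω, 0 ≤ p ω) (X : Ω → α) (Y : Ω → β) (Z : Ω → γ) :
    0 ≤ condMutualInfo p X Y Z := by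
  set V : Ω → (α × β) × γ := fun ω => ((X ω, Y ω), Z ω)
  set q : (α × β) × γ → ℝ := fun v => probOf p (fun ω => (X ω, Z ω)) (v.1.1, v.2)
    * probOf p (fun ω => (Y ω, Z ω)) (v.1.2, v.2) / probOf p Z v.2
  have hq : ∀ v, 0 ≤ q v := fun v => by
    have := probOf_nonneg p hp Z v.2
    have := probOf_nonneg p hp (fun ω => (X ω, Z ω)) (v.1.1, v.2)
    have := probOf_nonneg p hp (fun ω => (Y ω, Z ω)) (v.1.2, v.2)
    positivity
  -- Gibbs' inequality, pointwise: `log t ≤ t - 1` at `t = q / P(X, Y, Z)`.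
  have gibbs : ∀ ω, p ω * (1 - q (V ω) / probOf p V (V ω)) ≤ p ω *
      (Real.log (probOf p V (V ω)) + Real.log (probOf p Z (Z ω))
        - Real.log (probOf p (fun ω => (X ω, Z ω)) (X ω, Z ω))
        - Real.log (probOf p (fun ω => (Y ω, Z ω)) (Y ω, Z ω))) := by
    intro ω
    rcases (hp ω).eq_or_lt with hω | hω
    · rw [← hω, zero_mul, zero_mul]
    refine mul_le_mul_of_nonneg_left ?_ hω.le
    have hV := probOf_apply_pos p hp V hω
    have hZ := probOf_apply_pos p hp Z hω
    have hXZ := probOf_apply_pos p hp (fun ω => (X ω, Z ω)) hω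
    have hYZ := probOf_apply_pos p hp (fun ω => (Y ω, Z ω)) hω
    have hlog := Real.log_le_sub_one_of_pos (x := q (V ω) / probOf p V (V ω))
      (div_pos (div_pos (mul_pos hXZ hYZ) hZ) hV)
    rw [Real.log_div (by positivity) hV.ne', Real.log_div (by positivity) hZ.ne',
      Real.log_mul hXZ.ne' hYZ.ne'] at hlog
    linarith
  have mass : ∑ ω, p ω * (q (V ω) / probOf p V (V ω)) ≤ ∑ ω, p ω := by
    rw [← sum_probOf_mul p V (fun v => q v / probOf p V v)]
    calc ∑ v, probOf p V v * (q v / probOf p V v) ≤ ∑ v, q v := by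
          refine Finset.sum_le_sum fun v _ => ?_
          rcases eq_or_ne (probOf p V v) 0 with h0 | h0
          · rw [h0, zero_mul]; exact hq v
          · rw [mul_div_cancel₀ _ h0]
      _ = ∑ ω, p ω := by
          rw [Fintype.sum_prod_type, ← sum_probOf_mul_probOf_div p X Y Z]
          simp only [q, Fintype.sum_prod_type]
  rw [condMutualInfo_eq_sum]
  calc (0 : ℝ) ≤ ∑ ω, p ω - ∑ ω, p ω * (q (V ω) / probOf p V (V ω)) := sub_nonneg.2 mass
    _ = ∑ ω, p ω * (1 - q (V ω) / probOf p V (V ω)) := by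
        simp only [mul_sub, mul_one, Finset.sum_sub_distrib]
    _ ≤ _ := Finset.sum_le_sum fun ω _ => gibbs ω

end entropy

section jointVar

variable {Ω ι β : Type*} [DecidableEq ι]

lemma jointVar_union (Y : ι → Ω → β) {s t : Finset ι} (h : Disjoint s t) :
    jointVar Y (s ∪ t) =
      fun ω => Equiv.piFinsetUnion (fun _ => β) h (jointVar Y s ω, jointVar Y t ω) := by
  funext ω ⟨i, hi⟩
  rcases Finset.mem_union.1 hi with hs | ht
  · rw [Equiv.piFinsetUnion_left _ _ hs]; rfl
  · rw [Equiv.piFinsetUnion_right _ _ ht]; rfl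

variable [Fintype Ω] (p : Ω → ℝ) [Fintype β] [DecidableEq β] (Y : ι → Ω → β)

lemma shannonEntropy_jointVar_union {s t : Finset ι} (h : Disjoint s t) :
    shannonEntropy p (jointVar Y (s ∪ t))
      = shannonEntropy p (fun ω => (jointVar Y s ω, jointVar Y t ω)) := by
  rw [jointVar_union Y h]
  exact shannonEntropy_comp_of_injective p _ (Equiv.injective _)

lemma shannonEntropy_jointVar_union_prod {γ : Type*} [Fintype γ] [DecidableEq γ] (W : Ω → γ)
    {s t : Finset ι} (h : Disjoint s t) :
    shannonEntropy p (fun ω => (jointVar Y (s ∪ t) ω, W ω))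
      = shannonEntropy p (fun ω => ((jointVar Y s ω, jointVar Y t ω), W ω)) := by
  rw [jointVar_union Y h]
  exact shannonEntropy_comp_of_injective p (fun ω => ((jointVar Y s ω, jointVar Y t ω), W ω))
    (f := Prod.map (Equiv.piFinsetUnion (fun _ => β) h) id)
    ((Equiv.injective _).prodMap Function.injective_id)

theorem shannonEntropy_jointVar_union_add_inter_le (hp : ∀ ω, 0 ≤ p ω) (s t : Finset ι) :
    shannonEntropy p (jointVar Y (s ∪ t)) + shannonEntropy p (jointVar Y (s ∩ t))
      ≤ shannonEntropy p (jointVar Y s) + shannonEntropy p (jointVar Y t) := by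
  have h :=
    condMutualInfo_nonneg p hp (jointVar Y (s \ t)) (jointVar Y (t \ s)) (jointVar Y (s ∩ t))
  have hs : Disjoint (s \ t) (s ∩ t) := Finset.disjoint_sdiff_inter s t
  have ht : Disjoint (t \ s) (s ∩ t) := Finset.inter_comm t s ▸ Finset.disjoint_sdiff_inter t s
  have hst : s \ t ∪ t \ s ∪ s ∩ t = s ∪ t := by
    ext
    simp only [Finset.mem_union, Finset.mem_sdiff, Finset.mem_inter]
    tauto
  have e1 := shannonEntropy_jointVar_union_prod p Y (jointVar Y (s ∩ t))
    (disjoint_sdiff_sdiff : Disjoint (s \ t) (t \ s))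
  have e2 := shannonEntropy_jointVar_union p Y (Finset.disjoint_union_left.2 ⟨hs, ht⟩)
  have e3 := shannonEntropy_jointVar_union p Y hs
  have e4 := shannonEntropy_jointVar_union p Y ht
  rw [hst] at e2
  rw [Finset.sdiff_union_inter] at e3
  rw [Finset.inter_comm s t, Finset.sdiff_union_inter, Finset.inter_comm] at e4
  unfold condMutualInfo at h
  linarith

end jointVar

section condIndep

variable {Ω ι β γ : Type*} [Fintype Ω] [Fintype ι] [DecidableEq β] [DecidableEq γ]

/-- The denominators `P(W = w)` of the conditional probabilities are cleared, so that the
condition is also meaningful where `P(W = w) = 0`. -/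
def CondIndepGiven (p : Ω → ℝ) (Y : ι → Ω → β) (W : Ω → γ) : Prop :=
  ∀ (b : ι → β) (w : γ),
    probOf p (fun ω => (fun i => Y i ω, W ω)) (b, w) * probOf p W w ^ (Fintype.card ι - 1)
      = ∏ i, probOf p (fun ω => (Y i ω, W ω)) (b i, w)

variable [DecidableEq ι] [Fintype β] {p : Ω → ℝ} {Y : ι → Ω → β} {W : Ω → γ}

theorem CondIndepGiven.probOf_jointVar_mul_pow (h : CondIndepGiven p Y W) (S : Finset ι)
    (b : S → β) (w : γ) :
    probOf p (fun ω => (jointVar Y S ω, W ω)) (b, w) * probOf p W w ^ (Fintype.card ι - 1)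
      = ∏ i, if hi : i ∈ S then probOf p (fun ω => (Y i ω, W ω)) (b ⟨i, hi⟩, w)
          else probOf p W w := by
  set A : ∀ i, Finset β := fun i => if hi : i ∈ S then {b ⟨i, hi⟩} else Finset.univ
  have hmarg : probOf p (fun ω => (jointVar Y S ω, W ω)) (b, w)
      = ∑ x ∈ Fintype.piFinset A, probOf p (fun ω => (fun i => Y i ω, W ω)) (x, w) := by
    rw [probOf_eq_sum_of_iff p _ (fun ω => (fun i => Y i ω, W ω)) (b, w)
      (Fintype.piFinset A ×ˢ {w}), Finset.sum_product]
    · simp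
    · intro ω
      simp only [Prod.mk.injEq, Finset.mem_product, Fintype.mem_piFinset, Finset.mem_singleton,
        funext_iff, Subtype.forall, jointVar]
      refine and_congr_left' (forall_congr' fun i => ?_)
      by_cases hi : i ∈ S <;> simp [A, hi]
  rw [hmarg, Finset.sum_mul, Finset.sum_congr rfl fun x _ => h x w,
    ← Finset.prod_univ_sum A fun i y => probOf p (fun ω => (Y i ω, W ω)) (y, w)]
  refine Finset.prod_congr rfl fun i _ => ?_
  by_cases hi : i ∈ S
  · simp [A, hi]
  · simp [A, hi, sum_probOf_fst]

theorem CondIndepGiven.probOf_union_mul [Nonempty ι] (hp : ∀ ω, 0 ≤ p ω)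
    (h : CondIndepGiven p Y W) {s t : Finset ι} (hst : Disjoint s t) (u : s → β) (v : t → β)
    (w : γ) :
    probOf p (fun ω => ((jointVar Y s ω, jointVar Y t ω), W ω)) ((u, v), w) * probOf p W w
      = probOf p (fun ω => (jointVar Y s ω, W ω)) (u, w)
        * probOf p (fun ω => (jointVar Y t ω, W ω)) (v, w) := by
  have hrel : probOf p (fun ω => ((jointVar Y s ω, jointVar Y t ω), W ω)) ((u, v), w)
      = probOf p (fun ω => (jointVar Y (s ∪ t) ω, W ω))
          (Equiv.piFinsetUnion (fun _ => β) hst (u, v), w) := by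
    rw [jointVar_union Y hst]
    exact (probOf_comp_of_injective p (fun ω => ((jointVar Y s ω, jointVar Y t ω), W ω))
      (f := Prod.map (Equiv.piFinsetUnion (fun _ => β) hst) id)
      ((Equiv.injective _).prodMap Function.injective_id) ((u, v), w)).symm
  rw [hrel]
  set c := probOf p W w
  rcases eq_or_ne c 0 with hc | hc
  · have hs : probOf p (fun ω => (jointVar Y s ω, W ω)) (u, w) = 0 :=
      le_antisymm (hc ▸ probOf_le_probOf_comp p hp _ Prod.snd (u, w)) (probOf_nonneg p hp _ _)
    rw [hc, hs, mul_zero, zero_mul]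
  have factor : ∀ i,
      (if hi : i ∈ s ∪ t then probOf p (fun ω => (Y i ω, W ω))
        (Equiv.piFinsetUnion (fun _ => β) hst (u, v) ⟨i, hi⟩, w) else c) * c
      = (if hi : i ∈ s then probOf p (fun ω => (Y i ω, W ω)) (u ⟨i, hi⟩, w) else c)
        * (if hi : i ∈ t then probOf p (fun ω => (Y i ω, W ω)) (v ⟨i, hi⟩, w) else c) := by
    intro i
    by_cases hs : i ∈ s
    · rw [dif_pos (Finset.mem_union_left t hs), dif_pos hs,
        dif_neg (Finset.disjoint_left.1 hst hs), Equiv.piFinsetUnion_left _ _ hs]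
    by_cases ht : i ∈ t
    · rw [dif_pos (Finset.mem_union_right s ht), dif_neg hs, dif_pos ht,
        Equiv.piFinsetUnion_right _ _ ht, mul_comm]
    · rw [dif_neg (by simp [hs, ht]), dif_neg hs, dif_neg ht]
  have hpow : c ^ Fintype.card ι = c * c ^ (Fintype.card ι - 1) := by
    rw [← pow_succ', Nat.sub_add_cancel Fintype.card_pos]
  refine mul_right_cancel₀ (pow_ne_zero 2 (pow_ne_zero (Fintype.card ι - 1) hc)) ?_
  calc _ = (probOf p (fun ω => (jointVar Y (s ∪ t) ω, W ω))
          (Equiv.piFinsetUnion (fun _ => β) hst (u, v), w) * c ^ (Fintype.card ι - 1))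
        * c ^ Fintype.card ι := by rw [hpow]; ring
    _ = (probOf p (fun ω => (jointVar Y s ω, W ω)) (u, w) * c ^ (Fintype.card ι - 1))
        * (probOf p (fun ω => (jointVar Y t ω, W ω)) (v, w) * c ^ (Fintype.card ι - 1)) := by
        rw [h.probOf_jointVar_mul_pow, h.probOf_jointVar_mul_pow, h.probOf_jointVar_mul_pow,
          ← Finset.prod_mul_distrib, ← Finset.card_univ, ← Finset.prod_const,
          ← Finset.prod_mul_distrib]
        exact Finset.prod_congr rfl fun i _ => factor i
    _ = _ := by ring

theorem CondIndepGiven.shannonEntropy_union [Fintype γ] [Nonempty ι] (hp : ∀ ω, 0 ≤ p ω)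
    (h : CondIndepGiven p Y W) {s t : Finset ι} (hst : Disjoint s t) :
    shannonEntropy p (fun ω => (jointVar Y (s ∪ t) ω, W ω)) + shannonEntropy p W
      = shannonEntropy p (fun ω => (jointVar Y s ω, W ω))
        + shannonEntropy p (fun ω => (jointVar Y t ω, W ω)) := by
  have h0 := condMutualInfo_eq_zero p hp (jointVar Y s) (jointVar Y t) W (h.probOf_union_mul hp hst)
  rw [condMutualInfo, ← shannonEntropy_jointVar_union_prod p Y W hst] at h0
  linarith

end condIndep

theorem mutualInfo_submodular_of_condIndep_general {Ω ι β γ : Type*} [Fintype Ω] [Fintype ι]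
    [DecidableEq ι] [Fintype β] [DecidableEq β] [Fintype γ] [DecidableEq γ]
    (p : Ω → ℝ) (hp : ∀ ω, 0 ≤ p ω)
    (Y : ι → Ω → β) (W : Ω → γ)
    (hCI : ∀ (b : ι → β) (w : γ),
      probOf p (fun ω => (fun i => Y i ω, W ω)) (b, w) *
        (probOf p W w) ^ (Fintype.card ι - 1) =
      ∏ i, probOf p (fun ω => (Y i ω, W ω)) (b i, w)) :
    ∀ (S T : Finset ι) (z : ι), S ⊆ T → z ∉ T →
      mutualInfo p (jointVar Y (insert z T)) W - mutualInfo p (jointVar Y T) W ≤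
      mutualInfo p (jointVar Y (insert z S)) W - mutualInfo p (jointVar Y S) W := by
  intro S T z hST hzT
  have : Nonempty ι := ⟨z⟩
  have hinsert : ∀ R : Finset ι, z ∉ R →
      shannonEntropy p (fun ω => (jointVar Y (insert z R) ω, W ω)) + shannonEntropy p W
        = shannonEntropy p (fun ω => (jointVar Y {z} ω, W ω))
          + shannonEntropy p (fun ω => (jointVar Y R ω, W ω)) := fun R hR => by
    rw [Finset.insert_eq]
    exact CondIndepGiven.shannonEntropy_union hp hCI (Finset.disjoint_singleton_left.2 hR)
  have hsub := shannonEntropy_jointVar_union_add_inter_le p Y hp T (insert z S)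
  rw [Finset.union_insert, Finset.union_eq_left.2 hST, Finset.inter_insert_of_notMem hzT,
    Finset.inter_eq_right.2 hST] at hsub
  have hT := hinsert T hzT
  have hS := hinsert S fun hzS => hzT (hST hzS)
  simp only [mutualInfo]
  linarith

/-- If `Y₁, …, Yₙ` are conditionally independent given `W`
(`P(Y = b, W = w) ⬝ P(W = w)^(n-1) = ∏ i, P(Y i = b i, W = w)`), then the set
function `S ↦ I(Y_S ; W)` is submodular:
`I(Y_{S∪{z}};W) - I(Y_S;W) ≥ I(Y_{T∪{z}};W) - I(Y_T;W)` for `S ⊆ T`, `z ∉ T`. -/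
theorem mutualInfo_submodular_of_condIndep {Ω ι β γ : Type*} [Fintype Ω] [Fintype ι]
    [DecidableEq ι] [Fintype β] [DecidableEq β] [Fintype γ] [DecidableEq γ]
    (p : Ω → ℝ) (hp : ∀ ω, 0 ≤ p ω) (hp1 : ∑ ω, p ω = 1)
    (Y : ι → Ω → β) (W : Ω → γ)
    (hCI : ∀ (b : ι → β) (w : γ),
      probOf p (fun ω => (fun i => Y i ω, W ω)) (b, w) *
        (probOf p W w) ^ (Fintype.card ι - 1) =
      ∏ i, probOf p (fun ω => (Y i ω, W ω)) (b i, w)) :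
    ∀ (S T : Finset ι) (z : ι), S ⊆ T → z ∉ T →
      mutualInfo p (jointVar Y (insert z T)) W - mutualInfo p (jointVar Y T) W ≤
      mutualInfo p (jointVar Y (insert z S)) W - mutualInfo p (jointVar Y S) W :=
  mutualInfo_submodular_of_condIndep_general p hp Y W hCI
end

section
/- Replacing each element x of cost c(x) ∈ ℕ₊ by c(x) unit-cost copies, each contributing marginal gain (f(S∪{x})-f(S))/c(x): if f is monotone submodular on the original ground set, the induced set function on the expanded ground set (where a set's value is f of the set of original elements all of whose copies are included, plus proportional credit for partially included elements defined by the normalized gains) makes the weighted greedy choice on originals coincide with the unit-cost greedy choice on copies. -/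
open Finset

variable {α : Type*} [Fintype α] [DecidableEq α]

/-- The set of unit-cost copies of the elements of `S`: element `x` has the
`c x` copies `(x, 0), …, (x, c x - 1)`. -/
def copies (c : α → ℕ+) (S : Finset α) : Finset (α × ℕ) :=
  S.biUnion fun x => {x} ×ˢ Finset.range (c x)

/-- Original elements all of whose copies are included in `U`. -/
def fullElems (c : α → ℕ+) (U : Finset (α × ℕ)) : Finset α :=
  Finset.univ.filter fun x => ∀ j < (c x : ℕ), (x, j) ∈ U

/-- The induced set function on the expanded ground set of copies: `f` of the set of
fully included original elements, plus, for each partially included element, a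
proportional credit given by its cost-normalized marginal gain. -/
noncomputable def inducedF (f : Finset α → ℝ) (c : α → ℕ+)
    (U : Finset (α × ℕ)) : ℝ :=
  f (fullElems c U) +
    ∑ x ∈ Finset.univ.filter fun x =>
        x ∉ fullElems c U ∧ (U.filter fun p => p.1 = x).Nonempty,
      ((U.filter fun p => p.1 = x).card / (c x : ℝ)) *
        (f (insert x (fullElems c U)) - f (fullElems c U))

lemma mem_copies {c : α → ℕ+} {S : Finset α} {p : α × ℕ} :
    p ∈ copies c S ↔ p.1 ∈ S ∧ p.2 < (c p.1 : ℕ) := by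
  rcases p with ⟨x, j⟩
  simp only [copies, Finset.mem_biUnion, Finset.mem_product, Finset.mem_singleton,
    Finset.mem_range]
  constructor
  · rintro ⟨a, ha, rfl, h⟩; exact ⟨ha, h⟩
  · rintro ⟨hx, hj⟩; exact ⟨x, hx, rfl, hj⟩

lemma fullElems_copies (c : α → ℕ+) (S : Finset α) : fullElems c (copies c S) = S := by
  ext x
  simp only [fullElems, mem_filter, mem_univ, true_and, mem_copies]
  constructor
  · intro h; exact (h 0 (c x).pos).1
  · intro hx j hj; exact ⟨hx, hj⟩

lemma inducedF_copies (f : Finset α → ℝ) (c : α → ℕ+) (S : Finset α) :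
    inducedF f c (copies c S) = f S := by
  rw [inducedF, fullElems_copies]
  have h : (Finset.univ.filter fun y =>
      y ∉ S ∧ ((copies c S).filter fun p => p.1 = y).Nonempty) = ∅ := by
    ext y
    simp only [mem_filter, mem_univ, true_and, Finset.notMem_empty, iff_false, not_and]
    rintro hy ⟨p, hp⟩
    rw [mem_filter] at hp
    exact hy (hp.2 ▸ (mem_copies.mp hp.1).1)
  rw [h]
  simp

lemma inducedF_insert (f : Finset α → ℝ) (c : α → ℕ+) (S : Finset α) (x : α) (j : ℕ)
    (hx : x ∉ S) (hj : j < (c x : ℕ)) :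
    inducedF f c (insert (x, j) (copies c S)) = f S + (f (insert x S) - f S) / (c x : ℝ) := by
  by_cases h1 : (c x : ℕ) = 1
  · have hj0 : j = 0 := by omega
    subst hj0
    have hful : fullElems c (insert (x, 0) (copies c S)) = insert x S := by
      ext y
      simp only [fullElems, mem_filter, mem_univ, true_and, Finset.mem_insert]
      constructor
      · intro h
        rcases h 0 (c y).pos with h' | h'
        · left; exact congrArg Prod.fst h'
        · right; exact (mem_copies.mp h').1
      · rintro (rfl | hy) k hk
        · have hk0 : k = 0 := by omega
          subst hk0; exact Or.inl rfl
        · exact Or.inr (mem_copies.mpr ⟨hy, hk⟩)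
    rw [inducedF, hful]
    have hfilt : (Finset.univ.filter fun y =>
        y ∉ insert x S ∧ (((insert (x,0) (copies c S)).filter fun p => p.1 = y)).Nonempty) = ∅ := by
      ext y
      simp only [mem_filter, mem_univ, true_and, Finset.notMem_empty, iff_false, not_and]
      rintro hy ⟨p, hp⟩
      rw [mem_filter, Finset.mem_insert] at hp
      rcases hp.1 with h' | h'
      · exact hy (Finset.mem_insert.mpr (Or.inl (hp.2 ▸ (congrArg Prod.fst h').symm ▸ rfl)))
      · exact hy (Finset.mem_insert.mpr (Or.inr (hp.2 ▸ (mem_copies.mp h').1)))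
    rw [hfilt]
    have : (c x : ℝ) = 1 := by exact_mod_cast h1
    simp [this]
  · have hcx2 : 2 ≤ (c x : ℕ) := by have := (c x).pos; omega
    set U := insert (x, j) (copies c S) with hU
    have hmemU : ∀ p : α × ℕ, p ∈ U ↔ p = (x, j) ∨ (p.1 ∈ S ∧ p.2 < (c p.1 : ℕ)) := by
      intro p; rw [hU, Finset.mem_insert, mem_copies]
    have hful : fullElems c U = S := by
      ext y
      simp only [fullElems, mem_filter, mem_univ, true_and]
      constructor
      · intro h
        by_cases hyx : y = x
        · subst hyx
          set k := if j = 0 then 1 else 0 with hk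
          have hkcx : k < (c y : ℕ) := by rw [hk]; split <;> omega
          have hkj : k ≠ j := by rw [hk]; split <;> omega
          rcases (hmemU (y, k)).mp (h k hkcx) with h' | h'
          · exact absurd (congrArg Prod.snd h') hkj
          · exact absurd h'.1 hx
        · rcases (hmemU (y, 0)).mp (h 0 (c y).pos) with h' | h'
          · exact absurd (congrArg Prod.fst h') hyx
          · exact h'.1
      · intro hy k hk
        exact (hmemU (y, k)).mpr (Or.inr ⟨hy, hk⟩)
    have hfilt : (Finset.univ.filter fun y =>
        y ∉ S ∧ ((U.filter fun p => p.1 = y)).Nonempty) = {x} := by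
      ext y
      simp only [mem_filter, mem_univ, true_and, Finset.mem_singleton]
      constructor
      · rintro ⟨hy, p, hp⟩
        rw [mem_filter] at hp
        rcases (hmemU p).mp hp.1 with h' | h'
        · rw [← hp.2, h']
        · exact absurd (hp.2 ▸ h'.1) hy
      · rintro rfl
        exact ⟨hx, (_, j), by rw [mem_filter]; exact ⟨(hmemU _).mpr (Or.inl rfl), rfl⟩⟩
    have hcard : (U.filter fun p => p.1 = x) = {(x, j)} := by
      ext p
      rw [mem_filter, Finset.mem_singleton]
      constructor
      · rintro ⟨hp, hp1⟩
        rcases (hmemU p).mp hp with h' | h'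
        · exact h'
        · exact absurd (hp1 ▸ h'.1) hx
      · rintro rfl; exact ⟨(hmemU _).mpr (Or.inl rfl), rfl⟩
    rw [inducedF, hful, hfilt, Finset.sum_singleton, hcard]
    rw [Finset.card_singleton]
    push_cast
    rw [one_div_mul_eq_div]

/-- Replacing each element `x` of cost `c x` by `c x` unit-cost copies, each copy
contributing marginal gain `(f (S ∪ {x}) - f S) / c x`:  for a monotone submodular
`f` with `f ∅ = 0`, adding any single copy `(x, j)` of `x ∉ S` to the copies of `S`
increases the induced function exactly by the cost-normalized marginal gain, and
consequently `x` maximizes the weighted greedy criterion among originals iff its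
copies maximize the unit-cost greedy criterion among all available copies. -/
theorem copies_greedy_coincide (f : Finset α → ℝ) (c : α → ℕ+)
    (hmono : ∀ S T : Finset α, S ⊆ T → f S ≤ f T)
    (hsub : ∀ (S T : Finset α) (x : α), S ⊆ T → x ∉ T →
      f (insert x T) - f T ≤ f (insert x S) - f S)
    (hempty : f ∅ = 0) :
    ∀ (S : Finset α) (x : α), x ∉ S → ∀ j < (c x : ℕ),
      (inducedF f c (insert (x, j) (copies c S)) - inducedF f c (copies c S) =
        (f (insert x S) - f S) / (c x : ℝ)) ∧
      ((∀ y : α, y ∉ S →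
          (f (insert y S) - f S) / (c y : ℝ) ≤ (f (insert x S) - f S) / (c x : ℝ)) ↔
        (∀ q ∈ copies c Finset.univ \ copies c S,
          inducedF f c (insert q (copies c S)) - inducedF f c (copies c S) ≤
          inducedF f c (insert (x, j) (copies c S)) - inducedF f c (copies c S))) := by
  intro S x hx j hj
  have key : ∀ (y : α) (k : ℕ), y ∉ S → k < (c y : ℕ) →
      inducedF f c (insert (y, k) (copies c S)) - inducedF f c (copies c S) =
        (f (insert y S) - f S) / (c y : ℝ) := by
    intro y k hy hk
    rw [inducedF_insert f c S y k hy hk, inducedF_copies]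
    ring
  refine ⟨key x j hx hj, ?_⟩
  constructor
  · intro h q hq
    obtain ⟨y, k⟩ := q
    rw [Finset.mem_sdiff, mem_copies, mem_copies] at hq
    have hk : k < (c y : ℕ) := hq.1.2
    have hy : y ∉ S := fun hS => hq.2 ⟨hS, hk⟩
    rw [key y k hy hk, key x j hx hj]
    exact h y hy
  · intro h y hy
    have hq : (y, 0) ∈ copies c Finset.univ \ copies c S := by
      rw [Finset.mem_sdiff, mem_copies, mem_copies]
      exact ⟨⟨Finset.mem_univ y, (c y).pos⟩, fun hS => hy hS.1⟩
    have := h (y, 0) hq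
    rwa [key y 0 hy (c y).pos, key x j hx hj] at this
end
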